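/- Let σ = co({x_j}_{j=0}^n) ⊂ ℝ^n be a simplex with affinely independent vertices, g : ℝ^n → ℝ^n twice continuously differentiable on an open set containing σ with |∂²g^{(p)}/∂x^{(q)}∂x^{(r)}(ξ)| ≤ β for all ξ ∈ σ and all p, q, r, V : ℝ^n → ℝ affine with gradient ∇V, and l ∈ ℝ^n with l ≥ |∇V| entrywise. Let b₂ > 0 and suppose that at each vertex j: if x_j = 0 then V(x_j) = 0 and g(x_j)ᵀ∇V + c_j β 1_nᵀ l ≤ 0, while if x_j ≠ 0 then V(x_j) > 0 and g(x_j)ᵀ∇V + c_j β 1_nᵀ l ≤ −b₂. Assume at least one vertex is nonzero and set b̃₂ := min{ b₂ / V(x_j) : x_j ≠ 0 }. Then the Dini derivative of V along g satisfies D⁺V(x) ≤ −b̃₂ · V(x) for every x ∈ σ. -/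

import Mathlib

/-!
Since `V` is affine, `D⁺V(y) = ∇Vᵀ g(y)` and `V(y) = ∑ α_j V(x_j)` in barycentric coordinates.
The key estimate is that each component of `g` differs from its linear interpolation
`∑ α_j g(x_j)` by at most `β ∑ α_j c_j`: expanding `g^{(p)}` to second order about `x_0` at `y` and
at every vertex, the first-order terms cancel because `y - x_0 = ∑ α_j (x_j - x_0)`, the remainders
are at most `(nβ/2)‖· - x_0‖²`, and `‖y - x_0‖² ≤ (max_k ‖x_k - x_0‖) ∑ α_j ‖x_j - x_0‖`.
Weighting the vertex conditions by `α_j` then gives `∇Vᵀ g(y) ≤ ∑ α_j (-b̃₂ V(x_j)) = -b̃₂ V(y)`.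
-/

open Filter Topology Set
open scoped BigOperators

/-- Second partial derivative `∂²φ/∂x^{(q)}∂x^{(r)}` of a scalar function on ℝⁿ. -/
noncomputable def secondPartial {n : ℕ} (φ : EuclideanSpace ℝ (Fin n) → ℝ) (q r : Fin n)
    (ξ : EuclideanSpace ℝ (Fin n)) : ℝ :=
  fderiv ℝ (fun y => fderiv ℝ φ y (EuclideanSpace.single r 1)) ξ (EuclideanSpace.single q 1)

/-- Dini derivative of `V` at `y` along the vector field `g`. -/
noncomputable def diniDeriv {n : ℕ} (V : EuclideanSpace ℝ (Fin n) → ℝ)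
    (g : EuclideanSpace ℝ (Fin n) → EuclideanSpace ℝ (Fin n))
    (y : EuclideanSpace ℝ (Fin n)) : EReal :=
  Filter.limsup (fun h : ℝ => (((V (y + h • g y) - V y) / h : ℝ) : EReal)) (𝓝[>] (0 : ℝ))

lemma abs_sub_sub_deriv_le_of_abs_deriv2_le {f f' f'' : ℝ → ℝ} {M : ℝ}
    (hf : ∀ t ∈ Icc (0 : ℝ) 1, HasDerivAt f (f' t) t)
    (hf' : ∀ t ∈ Icc (0 : ℝ) 1, HasDerivAt f' (f'' t) t)
    (hM : ∀ t ∈ Icc (0 : ℝ) 1, |f'' t| ≤ M) :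
    |f 1 - f 0 - f' 0| ≤ M / 2 := by
  have hslope : ∀ t ∈ Icc (0 : ℝ) 1, |f' t - f' 0| ≤ M * t := fun t ht => by
    simpa using norm_image_sub_le_of_norm_deriv_le_segment'
      (fun s hs => (hf' s hs).hasDerivWithinAt) (fun s hs => hM s (Ico_subset_Icc_self hs)) t ht
  have hB : ∀ t, HasDerivAt (fun t => M / 2 * t ^ 2) (M * t) t := fun t =>
    ((hasDerivAt_pow 2 t).const_mul (M / 2)).congr_deriv (by ring)
  have hr : ∀ t ∈ Icc (0 : ℝ) 1, HasDerivAt (fun t => f t - f 0 - t * f' 0) (f' t - f' 0) t :=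
    fun t ht => (((hf t ht).sub_const (f 0)).sub ((hasDerivAt_id t).mul_const (f' 0))).congr_deriv
      (by simp)
  simpa using image_norm_le_of_norm_deriv_right_le_deriv_boundary
    (fun t ht => (hr t ht).continuousAt.continuousWithinAt)
    (fun t ht => (hr t (Ico_subset_Icc_self ht)).hasDerivWithinAt) (by simp) hB
    (fun t ht => hslope t (Ico_subset_Icc_self ht)) (right_mem_Icc.2 zero_le_one)

section NormedSpace

variable {E : Type*} [NormedAddCommGroup E] [NormedSpace ℝ E]

lemma abs_sub_sub_fderiv_le_of_abs_fderiv_fderiv_le {φ : E → ℝ} {U : Set E} (hU : IsOpen U)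
    (hφ : ContDiffOn ℝ 2 φ U) {a b : E} (hab : segment ℝ a b ⊆ U) {K : ℝ}
    (hK : ∀ ξ ∈ segment ℝ a b, |fderiv ℝ (fderiv ℝ φ) ξ (b - a) (b - a)| ≤ K) :
    |φ b - φ a - fderiv ℝ φ a (b - a)| ≤ K / 2 := by
  set v := b - a
  have hseg : ∀ t ∈ Icc (0 : ℝ) 1, a + t • v ∈ segment ℝ a b := fun t ht => by
    rw [segment_eq_image']; exact ⟨t, ht, rfl⟩
  have hcurve : ∀ t : ℝ, HasDerivAt (fun t : ℝ => a + t • v) v t := fun t => by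
    simpa using ((hasDerivAt_id t).smul_const v).const_add a
  have hcont : ∀ t ∈ Icc (0 : ℝ) 1, ContDiffAt ℝ 2 φ (a + t • v) := fun t ht =>
    hφ.contDiffAt (hU.mem_nhds (hab (hseg t ht)))
  have hf : ∀ t ∈ Icc (0 : ℝ) 1,
      HasDerivAt (fun t => φ (a + t • v)) (fderiv ℝ φ (a + t • v) v) t := fun t ht =>
    ((hcont t ht).differentiableAt (by norm_num)).hasFDerivAt.comp_hasDerivAt t (hcurve t)
  have hf' : ∀ t ∈ Icc (0 : ℝ) 1, HasDerivAt (fun t => fderiv ℝ φ (a + t • v) v)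
      (fderiv ℝ (fderiv ℝ φ) (a + t • v) v v) t := fun t ht => by
    have hd : DifferentiableAt ℝ (fderiv ℝ φ) (a + t • v) :=
      ((hcont t ht).fderiv_right (m := 1) (by norm_num)).differentiableAt (by norm_num)
    have h1 : HasFDerivAt (fun w => fderiv ℝ φ w v) ((fderiv ℝ (fderiv ℝ φ) (a + t • v)).flip v)
        (a + t • v) := by
      simpa using hd.hasFDerivAt.clm_apply (hasFDerivAt_const v _)
    exact h1.comp_hasDerivAt t (hcurve t)
  simpa [v] using abs_sub_sub_deriv_le_of_abs_deriv2_le hf hf' fun t ht => hK _ (hseg t ht)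

lemma abs_apply_sum_smul_sub_sum_mul_le {ι : Type*} [Fintype ι] {φ : E → ℝ} (L : E →L[ℝ] ℝ)
    {s : Set E} (hs : Convex ℝ s) {a : E} {C : ℝ} (hC : 0 ≤ C)
    (hR : ∀ b ∈ s, |φ b - φ a - L (b - a)| ≤ C * ‖b - a‖ ^ 2)
    {x : ι → E} (hx : ∀ j, x j ∈ s) {M : ℝ} (hM : ∀ j, ‖x j - a‖ ≤ M)
    {α : ι → ℝ} (hα0 : ∀ j, 0 ≤ α j) (hα1 : ∑ j, α j = 1) :
    |φ (∑ j, α j • x j) - ∑ j, α j * φ (x j)| ≤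
      C * ∑ j, α j * (‖x j - a‖ * (M + ‖x j - a‖)) := by
  set y := ∑ j, α j • x j
  set R : E → ℝ := fun b => φ b - φ a - L (b - a)
  have hya : y - a = ∑ j, α j • (x j - a) := by
    simp only [y, smul_sub, Finset.sum_sub_distrib, ← Finset.sum_smul, hα1, one_smul]
  have hsplit : φ y - ∑ j, α j * φ (x j) = R y - ∑ j, α j * R (x j) := by
    have hL : L (y - a) = ∑ j, α j * L (x j - a) := by simp [hya, map_sum]
    simp only [R, mul_sub, Finset.sum_sub_distrib, ← Finset.sum_mul, hα1, hL]
    ring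
  have hdist : ‖y - a‖ ≤ ∑ j, α j * ‖x j - a‖ := by
    rw [hya]
    refine (norm_sum_le _ _).trans_eq (Finset.sum_congr rfl fun j _ => ?_)
    rw [norm_smul, Real.norm_of_nonneg (hα0 j)]
  have hmean_nonneg : 0 ≤ ∑ j, α j * ‖x j - a‖ :=
    Finset.sum_nonneg fun j _ => mul_nonneg (hα0 j) (norm_nonneg _)
  have hmean_le : ∑ j, α j * ‖x j - a‖ ≤ M :=
    calc _ ≤ ∑ j, α j * M := Finset.sum_le_sum fun j _ => mul_le_mul_of_nonneg_left (hM j) (hα0 j)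
      _ = M := by rw [← Finset.sum_mul, hα1, one_mul]
  have hy_sq : ‖y - a‖ ^ 2 ≤ M * ∑ j, α j * ‖x j - a‖ := by
    nlinarith [norm_nonneg (y - a)]
  have hvertices : |∑ j, α j * R (x j)| ≤ ∑ j, α j * (C * ‖x j - a‖ ^ 2) := by
    refine (Finset.abs_sum_le_sum_abs _ _).trans (Finset.sum_le_sum fun j _ => ?_)
    rw [abs_mul, abs_of_nonneg (hα0 j)]
    exact mul_le_mul_of_nonneg_left (hR _ (hx j)) (hα0 j)
  rw [hsplit]
  calc _ ≤ |R y| + |∑ j, α j * R (x j)| := abs_sub _ _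
    _ ≤ C * (M * ∑ j, α j * ‖x j - a‖) + ∑ j, α j * (C * ‖x j - a‖ ^ 2) :=
        add_le_add ((hR y (hs.sum_mem (fun j _ => hα0 j) hα1 fun j _ => hx j)).trans
          (mul_le_mul_of_nonneg_left hy_sq hC)) hvertices
    _ = C * ∑ j, α j * (‖x j - a‖ * (M + ‖x j - a‖)) := by
        simp only [Finset.mul_sum, ← Finset.sum_add_distrib]
        exact Finset.sum_congr rfl fun j _ => by ring

end NormedSpace

section Coordinates

variable {n : ℕ}

lemma secondPartial_eq_fderiv_fderiv {φ : EuclideanSpace ℝ (Fin n) → ℝ}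
    {ξ : EuclideanSpace ℝ (Fin n)} (hd : DifferentiableAt ℝ (fderiv ℝ φ) ξ) (q r : Fin n) :
    secondPartial φ q r ξ =
      fderiv ℝ (fderiv ℝ φ) ξ (EuclideanSpace.single q 1) (EuclideanSpace.single r 1) := by
  rw [secondPartial, fderiv_clm_apply hd (differentiableAt_const _)]
  simp

lemma abs_fderiv_fderiv_apply_le_of_secondPartial_le {φ : EuclideanSpace ℝ (Fin n) → ℝ}
    {ξ : EuclideanSpace ℝ (Fin n)} (hd : DifferentiableAt ℝ (fderiv ℝ φ) ξ) {β : ℝ}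
    (hβ : ∀ q r, |secondPartial φ q r ξ| ≤ β) (v : EuclideanSpace ℝ (Fin n)) :
    |fderiv ℝ (fderiv ℝ φ) ξ v v| ≤ β * (∑ q, |v q|) ^ 2 := by
  set e : Fin n → EuclideanSpace ℝ (Fin n) := fun q => EuclideanSpace.single q 1
  have hv : v = ∑ q, v q • e q := by
    simpa [e] using ((EuclideanSpace.basisFun (Fin n) ℝ).sum_repr v).symm
  have hexpand : fderiv ℝ (fderiv ℝ φ) ξ v v =
      ∑ q, ∑ r, v q * v r * fderiv ℝ (fderiv ℝ φ) ξ (e q) (e r) := by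
    conv_lhs => rw [hv]
    simp only [map_sum, map_smul, sum_apply, smul_apply, smul_eq_mul, Finset.mul_sum]
    rw [Finset.sum_comm]
    exact Finset.sum_congr rfl fun q _ => Finset.sum_congr rfl fun r _ => by ring
  rw [hexpand, sq, Finset.sum_mul_sum, Finset.mul_sum]
  refine (Finset.abs_sum_le_sum_abs _ _).trans (Finset.sum_le_sum fun q _ => ?_)
  rw [Finset.mul_sum]
  refine (Finset.abs_sum_le_sum_abs _ _).trans (Finset.sum_le_sum fun r _ => ?_)
  rw [abs_mul, abs_mul, mul_comm β]
  exact mul_le_mul_of_nonneg_left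
    ((secondPartial_eq_fderiv_fderiv hd q r).symm ▸ hβ q r) (by positivity)

lemma sum_abs_sq_le_card_mul_norm_sq (w : EuclideanSpace ℝ (Fin n)) :
    (∑ q, |w q|) ^ 2 ≤ n * ‖w‖ ^ 2 := by
  rw [EuclideanSpace.norm_eq, Real.sq_sqrt (by positivity)]
  simpa [sq_abs] using sq_sum_le_card_mul_sum_sq (s := Finset.univ) (f := fun q => |w q|)

lemma abs_sub_sub_fderiv_le_of_secondPartial_le {φ : EuclideanSpace ℝ (Fin n) → ℝ}
    {U : Set (EuclideanSpace ℝ (Fin n))} (hU : IsOpen U) (hφ : ContDiffOn ℝ 2 φ U)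
    {σ : Set (EuclideanSpace ℝ (Fin n))} (hσ : Convex ℝ σ) (hσU : σ ⊆ U) {β : ℝ} (hβ0 : 0 ≤ β)
    (hβ : ∀ ξ ∈ σ, ∀ q r, |secondPartial φ q r ξ| ≤ β) {a b : EuclideanSpace ℝ (Fin n)}
    (ha : a ∈ σ) (hb : b ∈ σ) :
    |φ b - φ a - fderiv ℝ φ a (b - a)| ≤ n * β / 2 * ‖b - a‖ ^ 2 := by
  have hseg := hσ.segment_subset ha hb
  refine (abs_sub_sub_fderiv_le_of_abs_fderiv_fderiv_le hU hφ (hseg.trans hσU)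
    (K := n * β * ‖b - a‖ ^ 2) fun ξ hξ => ?_).trans_eq (by ring)
  have hd : DifferentiableAt ℝ (fderiv ℝ φ) ξ :=
    ((hφ.contDiffAt (hU.mem_nhds (hσU (hseg hξ)))).fderiv_right (m := 1)
      (by norm_num)).differentiableAt (by norm_num)
  calc _ ≤ β * (∑ q, |(b - a) q|) ^ 2 :=
        abs_fderiv_fderiv_apply_le_of_secondPartial_le hd (hβ ξ (hseg hξ)) _
    _ ≤ β * (n * ‖b - a‖ ^ 2) := mul_le_mul_of_nonneg_left (sum_abs_sq_le_card_mul_norm_sq _) hβ0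
    _ = n * β * ‖b - a‖ ^ 2 := by ring

end Coordinates

lemma exists_weights_of_mem_convexHull_range {F : Type*} [AddCommGroup F] [Module ℝ F]
    {ι : Type*} [Fintype ι] {x : ι → F} {y : F} (hy : y ∈ convexHull ℝ (Set.range x)) :
    ∃ α : ι → ℝ, (∀ j, 0 ≤ α j) ∧ ∑ j, α j = 1 ∧ ∑ j, α j • x j = y := by
  classical
  rw [convexHull_range_eq_exists_affineCombination] at hy
  obtain ⟨s, w, hw₀, hw₁, rfl⟩ := hy
  refine ⟨fun j => if j ∈ s then w j else 0, fun j => ?_, ?_, ?_⟩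
  · by_cases h : j ∈ s <;> simp [h, hw₀]
  · rw [← hw₁, Finset.sum_ite_mem, Finset.univ_inter]
  · simp only [ite_smul, zero_smul, Finset.sum_ite_mem, Finset.univ_inter,
      Finset.affineCombination_eq_linear_combination s x w hw₁]

lemma sum_mul_le_sum_mul_add_of_abs_sub_le {ι : Type*} [Fintype ι] {w l u v : ι → ℝ} {ε : ℝ}
    (hl : ∀ i, |w i| ≤ l i) (huv : ∀ i, |u i - v i| ≤ ε) :
    ∑ i, w i * u i ≤ ∑ i, w i * v i + (∑ i, l i) * ε := by
  rw [Finset.sum_mul, ← sub_le_iff_le_add', ← Finset.sum_sub_distrib]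
  refine Finset.sum_le_sum fun i _ => ?_
  calc w i * u i - w i * v i ≤ |w i| * |u i - v i| := by
        rw [← mul_sub, ← abs_mul]
        exact le_abs_self _
    _ ≤ l i * ε := mul_le_mul (hl i) (huv i) (abs_nonneg _) ((abs_nonneg _).trans (hl i))

lemma le_neg_sInf_div_mul {ι P : Type*} [Finite ι] [Zero P] {x : ι → P} {V : P → ℝ}
    {A : ι → ℝ} {b : ℝ} (hzero : ∀ j, x j = 0 → V (x j) = 0 ∧ A j ≤ 0)
    (hnonzero : ∀ j, x j ≠ 0 → 0 < V (x j) ∧ A j ≤ -b) (j : ι) :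
    A j ≤ -sInf {t : ℝ | ∃ j, x j ≠ 0 ∧ t = b / V (x j)} * V (x j) := by
  by_cases hj : x j = 0
  · simpa [(hzero j hj).1] using (hzero j hj).2
  · obtain ⟨hVpos, hA⟩ := hnonzero j hj
    have hbdd : BddBelow {t : ℝ | ∃ j, x j ≠ 0 ∧ t = b / V (x j)} :=
      ((Set.finite_range fun j => b / V (x j)).subset fun t ht => by
        obtain ⟨k, -, rfl⟩ := ht
        exact ⟨k, rfl⟩).bddBelow
    have hle := (le_div_iff₀ hVpos).1 (csInf_le hbdd ⟨j, hj, rfl⟩)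
    linarith

section Affine

variable {n : ℕ} {V : EuclideanSpace ℝ (Fin n) → ℝ} {gradV : Fin n → ℝ} {ω : ℝ}

lemma apply_add_smul_sub_of_affine (hV : ∀ y, V y = (∑ i, gradV i * y i) + ω)
    (y v : EuclideanSpace ℝ (Fin n)) (h : ℝ) :
    V (y + h • v) - V y = h * ∑ i, gradV i * v i := by
  simp only [hV, PiLp.add_apply, PiLp.smul_apply, smul_eq_mul, Finset.mul_sum, mul_add,
    Finset.sum_add_distrib, mul_left_comm h]
  ring

lemma diniDeriv_eq_of_affine (hV : ∀ y, V y = (∑ i, gradV i * y i) + ω)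
    (g : EuclideanSpace ℝ (Fin n) → EuclideanSpace ℝ (Fin n)) (y : EuclideanSpace ℝ (Fin n)) :
    diniDeriv V g y = ((∑ i, gradV i * g y i : ℝ) : EReal) := by
  have hquot : (fun h : ℝ => (((V (y + h • g y) - V y) / h : ℝ) : EReal))
      =ᶠ[𝓝[>] 0] fun _ => ((∑ i, gradV i * g y i : ℝ) : EReal) := by
    filter_upwards [self_mem_nhdsWithin] with h hh
    rw [apply_add_smul_sub_of_affine hV, mul_div_cancel_left₀ _ (ne_of_gt hh)]
  rw [diniDeriv, limsup_congr hquot, limsup_const]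

lemma apply_sum_smul_of_affine (hV : ∀ y, V y = (∑ i, gradV i * y i) + ω) {ι : Type*}
    [Fintype ι] (x : ι → EuclideanSpace ℝ (Fin n)) {α : ι → ℝ} (hα1 : ∑ j, α j = 1) :
    V (∑ j, α j • x j) = ∑ j, α j * V (x j) := by
  simp only [hV, WithLp.ofLp_sum, WithLp.ofLp_smul, Finset.sum_apply, Pi.smul_apply, smul_eq_mul,
    Finset.mul_sum, mul_add, Finset.sum_add_distrib, ← Finset.sum_mul, hα1, one_mul]
  rw [Finset.sum_comm]
  exact congrArg (· + ω) (Finset.sum_congr rfl fun j _ => Finset.sum_congr rfl fun i _ => by ring)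

end Affine

theorem stmt3_general (n : ℕ)
    (x : Fin (n + 1) → EuclideanSpace ℝ (Fin n))
    (g : EuclideanSpace ℝ (Fin n) → EuclideanSpace ℝ (Fin n))
    (U : Set (EuclideanSpace ℝ (Fin n))) (hU : IsOpen U)
    (hσU : convexHull ℝ (Set.range x) ⊆ U)
    (hg : ContDiffOn ℝ 2 g U)
    (β : ℝ)
    (hβ : ∀ ξ ∈ convexHull ℝ (Set.range x), ∀ p q r : Fin n,
      |secondPartial (fun y => g y p) q r ξ| ≤ β)
    (V : EuclideanSpace ℝ (Fin n) → ℝ) (gradV : Fin n → ℝ) (ω : ℝ)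
    (hV : ∀ y, V y = (∑ i, gradV i * y i) + ω)
    (l : Fin n → ℝ) (hl : ∀ i, |gradV i| ≤ l i)
    (c : Fin (n + 1) → ℝ)
    (hc : ∀ j, c j = ((n : ℝ) / 2) * ‖x j - x 0‖ *
      ((⨆ k : Fin n, ‖x k.succ - x 0‖) + ‖x j - x 0‖))
    (b₂ : ℝ)
    (hzero : ∀ j, x j = 0 →
      V (x j) = 0 ∧ (∑ i, g (x j) i * gradV i) + c j * β * (∑ i, l i) ≤ 0)
    (hnonzero : ∀ j, x j ≠ 0 →
      0 < V (x j) ∧ (∑ i, g (x j) i * gradV i) + c j * β * (∑ i, l i) ≤ -b₂)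
    (btilde : ℝ)
    (hbt : btilde = sInf {t : ℝ | ∃ j, x j ≠ 0 ∧ t = b₂ / V (x j)}) :
    ∀ y ∈ convexHull ℝ (Set.range x), diniDeriv V g y ≤ ((-btilde * V y : ℝ) : EReal) := by
  intro y hy
  obtain ⟨α, hα0, hα1, rfl⟩ := exists_weights_of_mem_convexHull_range hy
  rw [diniDeriv_eq_of_affine hV, EReal.coe_le_coe_iff, apply_sum_smul_of_affine hV x hα1]
  have hxσ : ∀ j, x j ∈ convexHull ℝ (Set.range x) := fun j => subset_convexHull ℝ _ ⟨j, rfl⟩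
  have hM : ∀ j, ‖x j - x 0‖ ≤ ⨆ k : Fin n, ‖x k.succ - x 0‖ := Fin.cases
    (by simpa using Real.iSup_nonneg fun k => norm_nonneg _)
    (fun k => le_ciSup (f := fun k : Fin n => ‖x k.succ - x 0‖) (Set.finite_range _).bddAbove k)
  have hinterp : ∀ p, |g (∑ j, α j • x j) p - ∑ j, α j * g (x j) p| ≤ β * ∑ j, α j * c j := by
    intro p
    have hβ0 : 0 ≤ β := (abs_nonneg _).trans (hβ (x 0) (hxσ 0) p p p)
    have hgp : ContDiffOn ℝ 2 (fun w => g w p) U :=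
      (EuclideanSpace.proj (𝕜 := ℝ) p).contDiff.comp_contDiffOn hg
    refine (abs_apply_sum_smul_sub_sum_mul_le _ (convex_convexHull ℝ _) (by positivity)
      (fun b hb => abs_sub_sub_fderiv_le_of_secondPartial_le hU hgp (convex_convexHull ℝ _) hσU
        hβ0 (fun ξ hξ => hβ ξ hξ p) (hxσ 0) hb) hxσ hM hα0 hα1).trans_eq ?_
    simp only [hc, Finset.mul_sum]
    exact Finset.sum_congr rfl fun j _ => by ring
  have hvertex := le_neg_sInf_div_mul hzero hnonzero
  calc ∑ i, gradV i * g (∑ j, α j • x j) i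
      ≤ ∑ i, gradV i * ∑ j, α j * g (x j) i + (∑ i, l i) * (β * ∑ j, α j * c j) :=
        sum_mul_le_sum_mul_add_of_abs_sub_le hl hinterp
    _ = ∑ j, α j * ((∑ i, g (x j) i * gradV i) + c j * β * ∑ i, l i) := by
        simp only [mul_add, Finset.sum_add_distrib]
        congr 1
        · simp only [Finset.mul_sum]
          rw [Finset.sum_comm]
          exact Finset.sum_congr rfl fun j _ => Finset.sum_congr rfl fun i _ => by ring
        · rw [Finset.mul_sum, Finset.mul_sum]
          exact Finset.sum_congr rfl fun j _ => by ring
    _ ≤ ∑ j, α j * (-btilde * V (x j)) :=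
        Finset.sum_le_sum fun j _ => mul_le_mul_of_nonneg_left (hbt ▸ hvertex j) (hα0 j)
    _ = -btilde * ∑ j, α j * V (x j) := by
        rw [Finset.mul_sum]
        exact Finset.sum_congr rfl fun j _ => by ring

/-- per-vertex conditions with constant right-hand side `−b₂` imply
`D⁺V(x) ≤ −b̃₂ V(x)` on the simplex, with `b̃₂ = min { b₂ / V(x_j) : x_j ≠ 0 }`. -/
theorem stmt3 (n : ℕ)
    (x : Fin (n + 1) → EuclideanSpace ℝ (Fin n))
    (hx : LinearIndependent ℝ (fun j : Fin n => x j.succ - x 0))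
    (g : EuclideanSpace ℝ (Fin n) → EuclideanSpace ℝ (Fin n))
    (U : Set (EuclideanSpace ℝ (Fin n))) (hU : IsOpen U)
    (hσU : convexHull ℝ (Set.range x) ⊆ U)
    (hg : ContDiffOn ℝ 2 g U)
    (β : ℝ)
    (hβ : ∀ ξ ∈ convexHull ℝ (Set.range x), ∀ p q r : Fin n,
      |secondPartial (fun y => g y p) q r ξ| ≤ β)
    (V : EuclideanSpace ℝ (Fin n) → ℝ) (gradV : Fin n → ℝ) (ω : ℝ)
    (hV : ∀ y, V y = (∑ i, gradV i * y i) + ω)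
    (l : Fin n → ℝ) (hl : ∀ i, |gradV i| ≤ l i)
    (c : Fin (n + 1) → ℝ)
    (hc : ∀ j, c j = ((n : ℝ) / 2) * ‖x j - x 0‖ *
      ((⨆ k : Fin n, ‖x k.succ - x 0‖) + ‖x j - x 0‖))
    (b₂ : ℝ) (hb₂ : 0 < b₂)
    (hzero : ∀ j, x j = 0 →
      V (x j) = 0 ∧ (∑ i, g (x j) i * gradV i) + c j * β * (∑ i, l i) ≤ 0)
    (hnonzero : ∀ j, x j ≠ 0 →
      0 < V (x j) ∧ (∑ i, g (x j) i * gradV i) + c j * β * (∑ i, l i) ≤ -b₂)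
    (hex : ∃ j, x j ≠ 0)
    (btilde : ℝ)
    (hbt : btilde = sInf {t : ℝ | ∃ j, x j ≠ 0 ∧ t = b₂ / V (x j)}) :
    ∀ y ∈ convexHull ℝ (Set.range x), diniDeriv V g y ≤ ((-btilde * V y : ℝ) : EReal) :=
  stmt3_general n x g U hU hσU hg β hβ V gradV ω hV l hl c hc b₂ hzero hnonzero btilde hbt
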